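/- arXiv:2002.03492 — 5 statements merged into one kernel-verified Lean document; each statement's English description precedes it below -/
import Mathlib

section
/- Let α ∈ (0,1), λ > 0, β > 0 and let K₀, K₁ be real constants. Define f₁ : (0,1] → ℝ by f₁(r) = K₀((1−α)r+α)^(β/λ)/((λ+2β)(1−α)) + βr/(β+2λ) − α(βλ+β+2λ)/((β+λ)(β+2λ)(1−α)) + K₁((1−α)r+α)^(−(1+β/λ)). Then f₁ is differentiable on (0,1] and for every r ∈ (0,1] it satisfies the first-order differential equation λ·f₁′(r) = K₀((1−α)r+α)^(β/λ−1) − α/((1−α)r+α) − (1−α)(β+λ)f₁(r)/((1−α)r+α) + (1−α)βr/((1−α)r+α). -/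
/-!
`f₁` is a particular solution of the linear ODE plus `K₁` times the solution
`((1−α)r+α)^(−(1+β/λ))` of its homogeneous part. Writing `u = (1−α)r+α`, each power satisfies
`(u^p)' = (1−α) p u^p / u`, so after differentiating, the ODE becomes a rational identity in
`r`, `u^(β/λ)` and `u^(−(1+β/λ))`, the two powers entering as independent quantities.
-/

theorem hasDerivAt_affine_rpow {a b p x : ℝ} (hx : a * x + b ≠ 0) :
    HasDerivAt (fun y => (a * y + b) ^ p) (a * p * (a * x + b) ^ p / (a * x + b)) x := by
  have h := ((hasDerivAt_id x).const_mul a |>.add_const b).rpow_const (p := p) (Or.inl hx)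
  simpa [Real.rpow_sub_one hx, mul_div_assoc] using h

/-- Country 1's part of Lemma 2: the general best-response form `f₁` satisfies
the first-order ODE `λ f₁' = K₀((1−α)r+α)^(β/λ−1) − α/((1−α)r+α)
  − (1−α)(β+λ)f₁/((1−α)r+α) + (1−α)βr/((1−α)r+α)` on `(0,1]`. -/
theorem lemma2_country1_ODE
    (α lam β K₀ K₁ : ℝ) (hα : α ∈ Set.Ioo (0:ℝ) 1) (hlam : 0 < lam) (hβ : 0 < β)
    (f₁ : ℝ → ℝ)
    (hf₁ : ∀ r : ℝ, f₁ r =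
      K₀ * ((1 - α) * r + α) ^ (β / lam) / ((lam + 2 * β) * (1 - α))
      + β * r / (β + 2 * lam)
      - α * (β * lam + β + 2 * lam) / ((β + lam) * (β + 2 * lam) * (1 - α))
      + K₁ * ((1 - α) * r + α) ^ (-(1 + β / lam))) :
    ∀ r ∈ Set.Ioc (0:ℝ) 1, ∃ d : ℝ, HasDerivAt f₁ d r ∧
      lam * d = K₀ * ((1 - α) * r + α) ^ (β / lam - 1)
        - α / ((1 - α) * r + α)
        - (1 - α) * (β + lam) * f₁ r / ((1 - α) * r + α)
        + (1 - α) * β * r / ((1 - α) * r + α) := by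
  rintro r ⟨hr, -⟩
  obtain ⟨hα0, hα1⟩ := hα
  have hu : 0 < (1 - α) * r + α := by nlinarith
  have h1α : 1 - α ≠ 0 := by linarith
  have hpow₀ := ((hasDerivAt_affine_rpow (p := β / lam) hu.ne').const_mul K₀).div_const
    ((lam + 2 * β) * (1 - α))
  have hlin := ((hasDerivAt_id r).const_mul β).div_const (β + 2 * lam)
  have hpow₁ := (hasDerivAt_affine_rpow (p := -(1 + β / lam)) hu.ne').const_mul K₁
  have hderiv : HasDerivAt f₁ _ r :=
    ((hpow₀.add hlin).sub_const
      (α * (β * lam + β + 2 * lam) / ((β + lam) * (β + 2 * lam) * (1 - α)))).add hpow₁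
      |>.congr_of_eventuallyEq (.of_forall hf₁)
  refine ⟨_, hderiv, ?_⟩
  rw [hf₁, Real.rpow_sub_one hu.ne']
  field_simp
  ring
end

section
/- Let α ∈ (0,1), λ > 0, β > 0, and let I ⊆ ℝ be a nonempty open interval. Let g, h : I → ℝ be differentiable functions with (1−α)g(y)+α > 0 and (1−α)h(y)+α > 0 for all y ∈ I. Define F(y) = β(h(y)−y) + g(y) − λy and assume F(y) ≠ 0 on I. If for all y ∈ I the first-order conditions F(y)·g′(y) = β·g(y) + αβ/(1−α) and F(y)·h′(y)/λ = h(y) + α/(1−α) hold, then there exists a constant K₀ > 0 such that (1−α)g(y) + α = K₀·((1−α)h(y) + α)^(β/λ) for all y ∈ I. -/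
/-!
With `u = (1-α)g + α` and `v = (1-α)h + α`, the first-order conditions say exactly that
`F u' = β u` and `F v' = λ v`. Dividing, `u'/u = (β/λ) v'/v`, so `log u - (β/λ) log v` has zero
derivative on the interval and is a constant `log K₀`.
-/

open Real Set

theorem IsOpen.exists_pos_eq_mul_rpow_of_deriv_mul_eq {s : Set ℝ} (hs : IsOpen s)
    (hs' : IsPreconnected s) {u v : ℝ → ℝ} {c : ℝ}
    (hu : DifferentiableOn ℝ u s) (hv : DifferentiableOn ℝ v s)
    (hu0 : ∀ y ∈ s, 0 < u y) (hv0 : ∀ y ∈ s, 0 < v y)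
    (huv : ∀ y ∈ s, deriv u y * v y = c * (deriv v y * u y)) :
    ∃ K, 0 < K ∧ ∀ y ∈ s, u y = K * v y ^ c := by
  have hlogu (y) (hy : y ∈ s) : HasDerivAt (fun z ↦ log (u z)) (deriv u y / u y) y :=
    ((hu y hy).differentiableAt (hs.mem_nhds hy)).hasDerivAt.log (hu0 y hy).ne'
  have hlogv (y) (hy : y ∈ s) :
      HasDerivAt (fun z ↦ c * log (v z)) (c * (deriv v y / v y)) y :=
    (((hv y hy).differentiableAt (hs.mem_nhds hy)).hasDerivAt.log (hv0 y hy).ne').const_mul c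
  obtain ⟨a, ha⟩ := hs.exists_eq_add_of_deriv_eq hs'
    (fun y hy ↦ (hlogu y hy).differentiableAt.differentiableWithinAt)
    (fun y hy ↦ (hlogv y hy).differentiableAt.differentiableWithinAt)
    (fun y hy ↦ by
      rw [(hlogu y hy).deriv, (hlogv y hy).deriv]
      field_simp [(hu0 y hy).ne', (hv0 y hy).ne']
      linear_combination huv y hy)
  refine ⟨exp a, exp_pos a, fun y hy ↦ ?_⟩
  have hlog : log (u y) = c * log (v y) + a := ha hy
  rw [rpow_def_of_pos (hv0 y hy), ← exp_add, ← exp_log (hu0 y hy), hlog]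
  ring_nf

theorem mul_deriv_affine_eq_of_foc {α r F y : ℝ} {g : ℝ → ℝ} (hα : α ≠ 1)
    (hg : DifferentiableAt ℝ g y) (hfoc : F * deriv g y = r * g y + α * r / (1 - α)) :
    F * deriv (fun z ↦ (1 - α) * g z + α) y = r * ((1 - α) * g y + α) := by
  rw [((hg.hasDerivAt.const_mul (1 - α)).add_const α).deriv]
  have h1α : 1 - α ≠ 0 := sub_ne_zero.mpr hα.symm
  field_simp at hfoc
  linear_combination hfoc

theorem lemma2_integration_step_general
    (α lam β : ℝ) (hα : α ∈ Set.Ioo (0:ℝ) 1) (hlam : 0 < lam)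
    (p q : ℝ) (g h : ℝ → ℝ)
    (hgdiff : ∀ y ∈ Set.Ioo p q, DifferentiableAt ℝ g y)
    (hhdiff : ∀ y ∈ Set.Ioo p q, DifferentiableAt ℝ h y)
    (hgpos : ∀ y ∈ Set.Ioo p q, 0 < (1 - α) * g y + α)
    (hhpos : ∀ y ∈ Set.Ioo p q, 0 < (1 - α) * h y + α)
    (F : ℝ → ℝ)
    (hFne : ∀ y ∈ Set.Ioo p q, F y ≠ 0)
    (hfoc1 : ∀ y ∈ Set.Ioo p q, F y * deriv g y = β * g y + α * β / (1 - α))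
    (hfoc2 : ∀ y ∈ Set.Ioo p q, F y * deriv h y / lam = h y + α / (1 - α)) :
    ∃ K₀ : ℝ, 0 < K₀ ∧ ∀ y ∈ Set.Ioo p q,
      (1 - α) * g y + α = K₀ * ((1 - α) * h y + α) ^ (β / lam) := by
  have hα1 : α ≠ 1 := hα.2.ne
  refine isOpen_Ioo.exists_pos_eq_mul_rpow_of_deriv_mul_eq isPreconnected_Ioo
    (fun y hy ↦ (((hgdiff y hy).const_mul _).add_const _).differentiableWithinAt)
    (fun y hy ↦ (((hhdiff y hy).const_mul _).add_const _).differentiableWithinAt)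
    hgpos hhpos fun y hy ↦ ?_
  have hu := mul_deriv_affine_eq_of_foc hα1 (hgdiff y hy) (hfoc1 y hy)
  have hv := mul_deriv_affine_eq_of_foc (r := lam) hα1 (hhdiff y hy) <| by
    have := hfoc2 y hy
    field_simp at this ⊢
    linear_combination this
  apply mul_left_cancel₀ (mul_ne_zero (hFne y hy) hlam.ne')
  field_simp
  linear_combination lam * ((1 - α) * h y + α) * hu - β * ((1 - α) * g y + α) * hv

/-- The integration step (eq. (xd)) in the derivation of Lemma 2: if `g` and `h`
satisfy the two first-order optimality conditions on a nonempty open interval,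
then `(1−α)g(y) + α = K₀((1−α)h(y) + α)^(β/λ)` for some constant `K₀ > 0`. -/
theorem lemma2_integration_step
    (α lam β : ℝ) (hα : α ∈ Set.Ioo (0:ℝ) 1) (hlam : 0 < lam) (hβ : 0 < β)
    (p q : ℝ) (hpq : p < q) (g h : ℝ → ℝ)
    (hgdiff : ∀ y ∈ Set.Ioo p q, DifferentiableAt ℝ g y)
    (hhdiff : ∀ y ∈ Set.Ioo p q, DifferentiableAt ℝ h y)
    (hgpos : ∀ y ∈ Set.Ioo p q, 0 < (1 - α) * g y + α)
    (hhpos : ∀ y ∈ Set.Ioo p q, 0 < (1 - α) * h y + α)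
    (F : ℝ → ℝ) (hF : ∀ y, F y = β * (h y - y) + g y - lam * y)
    (hFne : ∀ y ∈ Set.Ioo p q, F y ≠ 0)
    (hfoc1 : ∀ y ∈ Set.Ioo p q, F y * deriv g y = β * g y + α * β / (1 - α))
    (hfoc2 : ∀ y ∈ Set.Ioo p q, F y * deriv h y / lam = h y + α / (1 - α)) :
    ∃ K₀ : ℝ, 0 < K₀ ∧ ∀ y ∈ Set.Ioo p q,
      (1 - α) * g y + α = K₀ * ((1 - α) * h y + α) ^ (β / lam) :=
  lemma2_integration_step_general α lam β hα hlam p q g h hgdiff hhdiff hgpos hhpos F hFne hfoc1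
    hfoc2
end

section
/- Let α ∈ (0,1), β > 0, and set λ = β. Define f₂ : [0,1] → ℝ by f₂(r) = ((β+1)/3)r − α(β+1)/(6(1−α)) + α³(β+1)/(6(1−α)³(r + α/(1−α))²). Then f₂ is differentiable on (0,1] and for every r ∈ (0,1] it satisfies Country 2's mutual best-response differential equation β·f₂′(r) = λβK₀^(−λ/β)((1−α)r+α)^(λ/β−1) − λβα/((1−α)r+α) − (1−α)(β+λ)f₂(r)/((1−α)r+α) + (1−α)λr/((1−α)r+α) with λ = β and K₀ = 1, i.e. β·f₂′(r) = β² − β²α/((1−α)r+α) − 2β(1−α)f₂(r)/((1−α)r+α) + (1−α)βr/((1−α)r+α). -/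
/-!
With `s = (1 - α) r + α` one has `r + α / (1 - α) = s / (1 - α)`, so
`f₂′ = (β + 1) / 3 · (1 - α³ / s³)`, and after this substitution both sides of the equation are
the same rational function of `s`, namely `β (β + 1) / 3 · (1 - α³ / s³)`.
-/

theorem hasDerivAt_mul_sub_add_div_sq (p q C k a x : ℝ) (hx : x + a ≠ 0) :
    HasDerivAt (fun x => p * x - q + C / (k * (x + a) ^ 2))
      (p - 2 * C / (k * (x + a) ^ 3)) x := by
  have hlin : HasDerivAt (fun x => p * x - q) p x := by
    simpa using ((hasDerivAt_id x).const_mul p).sub_const q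
  by_cases hk : k = 0
  · simpa [hk] using hlin
  have hsq : HasDerivAt (fun x => k * (x + a) ^ 2) (k * (2 * (x + a))) x := by
    simpa using (((hasDerivAt_id x).add_const a).pow 2).const_mul k
  refine (hlin.add ((hasDerivAt_const x C).fun_div hsq (by positivity))).congr_deriv ?_
  field_simp
  ring

theorem theorem1_f2_satisfies_ODE_general
    (α β : ℝ) (hα : α ∈ Set.Ioo (0:ℝ) 1)
    (f₂ : ℝ → ℝ)
    (hf₂ : ∀ r : ℝ, f₂ r =
      ((β + 1) / 3) * r
      - α * (β + 1) / (6 * (1 - α))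
      + α ^ 3 * (β + 1) / (6 * (1 - α) ^ 3 * (r + α / (1 - α)) ^ 2)) :
    ∀ r ∈ Set.Ioc (0:ℝ) 1, ∃ d : ℝ, HasDerivAt f₂ d r ∧
      β * d = β ^ 2
        - β ^ 2 * α / ((1 - α) * r + α)
        - 2 * β * (1 - α) * f₂ r / ((1 - α) * r + α)
        + (1 - α) * β * r / ((1 - α) * r + α) := by
  obtain ⟨hα0, hα1⟩ := hα
  rintro r ⟨hr0, -⟩
  have h1α : 0 < 1 - α := by linarith
  have hs : 0 < (1 - α) * r + α := by positivity
  have hshift : r + α / (1 - α) = ((1 - α) * r + α) / (1 - α) := by field_simp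
  rw [funext hf₂]
  refine ⟨_, hasDerivAt_mul_sub_add_div_sq _ _ _ _ _ r (by rw [hshift]; positivity), ?_⟩
  rw [hshift]
  field_simp
  ring

/-- Part of Theorem 1: the explicit strategy `f₂` for the case `λ = β` satisfies
Country 2's mutual best-response differential equation with `λ = β` and `K₀ = 1`,
i.e. `β f₂′(r) = β² − β²α/((1−α)r+α) − 2β(1−α)f₂(r)/((1−α)r+α) + (1−α)βr/((1−α)r+α)`. -/
theorem theorem1_f2_satisfies_ODE
    (α lam β : ℝ) (hα : α ∈ Set.Ioo (0:ℝ) 1) (hβ : 0 < β) (hlam : lam = β)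
    (f₂ : ℝ → ℝ)
    (hf₂ : ∀ r : ℝ, f₂ r =
      ((β + 1) / 3) * r
      - α * (β + 1) / (6 * (1 - α))
      + α ^ 3 * (β + 1) / (6 * (1 - α) ^ 3 * (r + α / (1 - α)) ^ 2)) :
    ∀ r ∈ Set.Ioc (0:ℝ) 1, ∃ d : ℝ, HasDerivAt f₂ d r ∧
      β * d = β ^ 2
        - β ^ 2 * α / ((1 - α) * r + α)
        - 2 * β * (1 - α) * f₂ r / ((1 - α) * r + α)
        + (1 - α) * β * r / ((1 - α) * r + α) :=
  theorem1_f2_satisfies_ODE_general α β hα f₂ hf₂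
end

section
/- Let α ∈ (0,1) and β > 0, and define f₁ : [0,1] → ℝ by f₁(r) = ((β+1)/(3β))r − α(β+1)/(6β(1−α)) + α³(β+1)/(6β(1−α)³(r + α/(1−α))²). Then f₁ is monotone nondecreasing on [0,1], and consequently f₁(r) ≥ 0 for all r ∈ [0,1]. -/
/-!
With `c = α / (1 - α)` and `K = (β + 1) / (6β)` one has `f₁ r = K * (h (r + c) - 3c)` for
`h x = 2x + c³ / x²`, and `h c = 3c`, so `f₁ 0 = 0`. On `[c, ∞)` the slope of `c³ / x²`
between `x ≤ y` is `-c³ (x + y) / (x² y²) ≥ -2`, because `c ≤ x ≤ y` bounds both `c³ x` and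
`c³ y` by `x² y²`; hence `h` is nondecreasing there, and so is `f₁` on `[0, 1]`.
-/

lemma cube_mul_add_le_two_mul_sq_mul_sq {c x y : ℝ} (hc : 0 ≤ c) (hcx : c ≤ x) (hxy : x ≤ y) :
    c ^ 3 * (x + y) ≤ 2 * (x ^ 2 * y ^ 2) := by
  have hx0 : 0 ≤ x := hc.trans hcx
  have hcube : c ^ 3 ≤ x ^ 3 := pow_le_pow_left₀ hc hcx 3
  have hx : c ^ 3 * x ≤ x ^ 2 * y ^ 2 :=
    calc c ^ 3 * x ≤ x ^ 3 * x := by gcongr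
      _ = x ^ 2 * x ^ 2 := by ring
      _ ≤ x ^ 2 * y ^ 2 := by gcongr
  have hy : c ^ 3 * y ≤ x ^ 2 * y ^ 2 :=
    calc c ^ 3 * y ≤ x ^ 3 * y := by gcongr; linarith
      _ = x ^ 2 * x * y := by ring
      _ ≤ x ^ 2 * y * y := by gcongr; linarith
      _ = x ^ 2 * y ^ 2 := by ring
  linarith

lemma monotoneOn_two_mul_add_cube_div_sq {c : ℝ} (hc : 0 < c) :
    MonotoneOn (fun x : ℝ => 2 * x + c ^ 3 / x ^ 2) (Set.Ici c) := by
  intro x (hcx : c ≤ x) y (hcy : c ≤ y) hxy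
  have hx : 0 < x := hc.trans_le hcx
  have hy : 0 < y := hc.trans_le hcy
  have hslope : c ^ 3 / x ^ 2 - c ^ 3 / y ^ 2 = (y - x) * (c ^ 3 * (x + y) / (x ^ 2 * y ^ 2)) := by
    field_simp
    ring
  have hratio : c ^ 3 * (x + y) / (x ^ 2 * y ^ 2) ≤ 2 := by
    rw [div_le_iff₀ (by positivity)]
    exact cube_mul_add_le_two_mul_sq_mul_sq hc.le hcx hxy
  have : (y - x) * (c ^ 3 * (x + y) / (x ^ 2 * y ^ 2)) ≤ (y - x) * 2 :=
    mul_le_mul_of_nonneg_left hratio (sub_nonneg.mpr hxy)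
  show 2 * x + c ^ 3 / x ^ 2 ≤ 2 * y + c ^ 3 / y ^ 2
  linarith

/-- Country 1's quasi-equilibrium strategy for `λ = β` is monotone nondecreasing
on `[0,1]`, and consequently nonnegative on `[0,1]`. -/
theorem theorem1_f1_monotone_nonneg
    (α β : ℝ) (hα : α ∈ Set.Ioo (0:ℝ) 1) (hβ : 0 < β)
    (f₁ : ℝ → ℝ)
    (hf₁ : ∀ r : ℝ, f₁ r =
      ((β + 1) / (3 * β)) * r
      - α * (β + 1) / (6 * β * (1 - α))
      + α ^ 3 * (β + 1) / (6 * β * (1 - α) ^ 3 * (r + α / (1 - α)) ^ 2)) :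
    MonotoneOn f₁ (Set.Icc 0 1) ∧ ∀ r ∈ Set.Icc (0:ℝ) 1, 0 ≤ f₁ r := by
  obtain ⟨c, hc_def⟩ : ∃ c, c = α / (1 - α) := ⟨_, rfl⟩
  obtain ⟨K, hK_def⟩ : ∃ K, K = (β + 1) / (6 * β) := ⟨_, rfl⟩
  have hc : 0 < c := hc_def ▸ div_pos hα.1 (sub_pos.mpr hα.2)
  have hK : 0 ≤ K := hK_def ▸ by positivity
  have hf : ∀ r, f₁ r = K * ((2 * (r + c) + c ^ 3 / (r + c) ^ 2) - 3 * c) := by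
    intro r
    -- `ring` treats the inverse of a sum as an opaque atom, so such denominators are named first.
    rw [hf₁, ← hc_def, hK_def]
    generalize (r + c) ^ 2 = q
    rw [hc_def]
    generalize 1 - α = d
    ring
  have hmono : MonotoneOn f₁ (Set.Icc 0 1) := by
    intro s hs t ht hst
    have hshift : s + c ∈ Set.Ici c := by simpa using hs.1
    have hshift' : t + c ∈ Set.Ici c := by simpa using ht.1
    rw [hf, hf]
    exact mul_le_mul_of_nonneg_left (sub_le_sub_right
      (monotoneOn_two_mul_add_cube_div_sq hc hshift hshift' (by linarith)) _) hK
  have hzero : f₁ 0 = 0 := by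
    rw [hf]
    field_simp
    ring
  refine ⟨hmono, fun r hr => ?_⟩
  rw [← hzero]
  exact hmono ⟨le_rfl, zero_le_one⟩ hr hr.1
end

section
/- Let α ∈ (0,1), λ > 0, β > 0, K₀ > 0. For ε > 0 small, let f₁^ε denote the general mutual best-response strategy f₁ of Lemma 2 with constant K₁ = K₁ᵃᵖ(ε) := [ K₀α^(β/λ)(1 + (1−α)βε/(αλ))/((λ+2β)(1−α)) + βε/(β+2λ) − α(βλ+β+2λ)/((β+λ)(β+2λ)(1−α)) ] / [ α^(−(1+β/λ))((1+β/λ)((1−α)/α)ε − 1) ], and let f₂^ε denote the strategy f₂ of Lemma 2 with constant K₂ = K₂ᵃᵖ(ε) := [ λβK₀^(−λ/β)α^(λ/β)(1 + (1−α)λε/(αβ))/((2λ+β)(1−α)) + λε/(2β+λ) − αβλ(1+2β+λ)/((β+λ)(2β+λ)(1−α)) ] / [ α^(−(1+λ/β))((1+λ/β)((1−α)/α)ε − 1) ]. Then f₁^ε(ε) = O(ε²) and f₂^ε(ε) = O(ε²) as ε → 0⁺; that is, the approximate quasi-equilibrium strategies satisfy the boundary conditions f₁(ε) = f₂(ε)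 = 0 to leading order in ε. -/
/-!
Write `u(ε) = (1 - α) ε + α`. Each strategy of Lemma 2 has the shape
`f(ε) = c u^p + b ε - C + K u^{-(1+p)}`, and the approximate constant is `K = N / D`, where `N`
is the first-order Taylor polynomial at `0` of `c u^p + b ε - C` and `-D` that of `u^{-(1+p)}`.
Hence `f = (c u^p + b ε - C - N) + (N / D) (u^{-(1+p)} + D)`: both brackets are second-order
Taylor remainders of smooth functions, so `O(ε²)`, and `N / D` stays bounded because
`D(0) = -α^{-(1+p)} ≠ 0`.
-/

open Asymptotics Filter Metric Set Topology

section Taylor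

variable {E : Type*} [NormedAddCommGroup E] [NormedSpace ℝ E]

theorem isBigO_sq_of_hasDerivAt_of_isBigO {F F' : ℝ → E}
    (hF : ∀ᶠ x in 𝓝 0, HasDerivAt F (F' x) x) (h0 : F 0 = 0) (hF' : F' =O[𝓝 0] fun x => x) :
    F =O[𝓝 0] fun x => x ^ 2 := by
  obtain ⟨C, hC⟩ := hF'.bound
  obtain ⟨δ, hδ, hball⟩ := eventually_nhds_iff_ball.mp (hF.and hC)
  refine IsBigO.of_bound (max C 0) ?_
  filter_upwards [ball_mem_nhds 0 hδ] with x hx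
  have hsub : closedBall (0 : ℝ) ‖x‖ ⊆ ball 0 δ := closedBall_subset_ball (by simpa using hx)
  have hmvt := (convex_closedBall (0 : ℝ) ‖x‖).norm_image_sub_le_of_norm_hasDerivWithin_le
    (f := F) (y := x) (C := max C 0 * ‖x‖) (fun t ht => (hball t (hsub ht)).1.hasDerivWithinAt)
    (fun t ht => (hball t (hsub ht)).2.trans <|
      mul_le_mul (le_max_left C 0) (mem_closedBall_zero_iff.mp ht) (norm_nonneg t)
        (le_max_right C 0))
    (mem_closedBall_self (norm_nonneg x)) (by simp)
  simpa [h0, mul_assoc, sq] using hmvt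

theorem taylor_remainder_isBigO_sq {F F' : ℝ → E}
    (hF : ∀ᶠ x in 𝓝 0, HasDerivAt F (F' x) x) (hF' : DifferentiableAt ℝ F' 0) :
    (fun x => F x - F 0 - x • F' 0) =O[𝓝 0] fun x => x ^ 2 := by
  refine isBigO_sq_of_hasDerivAt_of_isBigO (F' := fun x => F' x - F' 0) ?_ (by simp) ?_
  · filter_upwards [hF] with x hx
    exact ((hx.sub_const (F 0)).sub ((hasDerivAt_id x).smul_const (F' 0))).congr_deriv
      (by rw [one_smul])
  · simpa using hF'.isBigO_sub

end Taylor

theorem rpow_taylor_remainder_isBigO_sq {a : ℝ} (ha : 0 < a) (b r : ℝ) :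
    (fun ε : ℝ => (b * ε + a) ^ r - a ^ r - ε * (r * a ^ (r - 1) * b))
      =O[𝓝 0] fun ε => ε ^ 2 := by
  have hlin (ε : ℝ) : HasDerivAt (fun ε : ℝ => b * ε + a) b ε := by
    simpa using ((hasDerivAt_id ε).const_mul b).add_const a
  have hpos : ∀ᶠ ε in 𝓝 (0 : ℝ), 0 < b * ε + a :=
    (hlin 0).continuousAt.eventually (eventually_gt_nhds (by simpa using ha))
  have hF : ∀ᶠ ε in 𝓝 (0 : ℝ),
      HasDerivAt (fun ε : ℝ => (b * ε + a) ^ r) (b * r * (b * ε + a) ^ (r - 1)) ε := by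
    filter_upwards [hpos] with ε hε
    exact (hlin ε).rpow_const (Or.inl hε.ne')
  have hF' : DifferentiableAt ℝ (fun ε : ℝ => b * r * (b * ε + a) ^ (r - 1)) 0 :=
    (((hlin 0).rpow_const (Or.inl (by simpa using ha.ne'))).const_mul (b * r)).differentiableAt
  refine (taylor_remainder_isBigO_sq hF hF').congr_left fun ε => ?_
  simp only [mul_zero, zero_add, smul_eq_mul]
  ring

theorem isBigO_add_div_mul {ι : Type*} {l : Filter ι} {g G N D H : ι → ℝ} {d : ℝ} (hd : d ≠ 0)
    (hD : Tendsto D l (𝓝 d)) (hN : N =O[l] fun _ => (1 : ℝ))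
    (hGN : (fun x => G x - N x) =O[l] g) (hDH : (fun x => D x + H x) =O[l] g) :
    (fun x => G x + N x / D x * H x) =O[l] g := by
  have hND : (fun x => N x / D x) =O[l] fun _ => (1 : ℝ) := by
    simpa [div_eq_mul_inv] using hN.mul ((hD.inv₀ hd).isBigO_one ℝ)
  refine (hGN.add ((hND.mul hDH).congr_right fun x => one_mul (g x))).congr' ?_ EventuallyEq.rfl
  filter_upwards [hD.eventually_ne hd] with x hx
  field_simp
  ring

/-- The strategies of Lemma 2: `f₁` is the case `p = β/λ`, `f₂` the case `p = λ/β`. -/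
noncomputable def bestResponse (α p c b C K r : ℝ) : ℝ :=
  c * ((1 - α) * r + α) ^ p + b * r - C + K * ((1 - α) * r + α) ^ (-(1 + p))

noncomputable def approxConst (α p c b C ε : ℝ) : ℝ :=
  (c * α ^ p * (1 + p * (1 - α) * ε / α) + b * ε - C)
    / (α ^ (-(1 + p)) * ((1 + p) * ((1 - α) / α) * ε - 1))

theorem bestResponse_approxConst_isBigO_sq {α : ℝ} (hα : 0 < α) (p c b C : ℝ) :
    (fun ε => bestResponse α p c b C (approxConst α p c b C ε) ε) =O[𝓝 0] fun ε => ε ^ 2 := by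
  have hD : Tendsto (fun ε : ℝ => α ^ (-(1 + p)) * ((1 + p) * ((1 - α) / α) * ε - 1)) (𝓝 0)
      (𝓝 (-α ^ (-(1 + p)))) := by
    convert (show Continuous fun ε : ℝ => α ^ (-(1 + p)) * ((1 + p) * ((1 - α) / α) * ε - 1)
      by fun_prop).tendsto 0 using 2
    ring
  have hN : (fun ε : ℝ => c * α ^ p * (1 + p * (1 - α) * ε / α) + b * ε - C)
      =O[𝓝 0] fun _ => (1 : ℝ) :=
    (show Continuous fun ε : ℝ => c * α ^ p * (1 + p * (1 - α) * ε / α) + b * ε - C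
      by fun_prop).continuousAt.isBigO_one ℝ
  refine isBigO_add_div_mul (neg_ne_zero.mpr (Real.rpow_pos_of_pos hα _).ne') hD hN ?_ ?_
  · refine ((rpow_taylor_remainder_isBigO_sq hα (1 - α) p).const_mul_left c).congr_left
      fun ε => ?_
    rw [Real.rpow_sub_one hα.ne']
    field_simp
    ring
  · refine (rpow_taylor_remainder_isBigO_sq hα (1 - α) (-(1 + p))).congr_left fun ε => ?_
    rw [Real.rpow_sub_one hα.ne']
    field_simp
    ring

theorem approximate_boundary_conditions_general
    (α lam β K₀ : ℝ) (hα : α ∈ Set.Ioo (0:ℝ) 1)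
    (K₁ap K₂ap : ℝ → ℝ)
    (hK₁ap : ∀ ε : ℝ, K₁ap ε =
      (K₀ * α ^ (β / lam) * (1 + (1 - α) * β * ε / (α * lam)) / ((lam + 2 * β) * (1 - α))
        + β * ε / (β + 2 * lam)
        - α * (β * lam + β + 2 * lam) / ((β + lam) * (β + 2 * lam) * (1 - α)))
      / (α ^ (-(1 + β / lam)) * ((1 + β / lam) * ((1 - α) / α) * ε - 1)))
    (hK₂ap : ∀ ε : ℝ, K₂ap ε =
      (lam * β * K₀ ^ (-(lam / β)) * α ^ (lam / β) * (1 + (1 - α) * lam * ε / (α * β))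
            / ((2 * lam + β) * (1 - α))
        + lam * ε / (2 * β + lam)
        - α * β * lam * (1 + 2 * β + lam) / ((β + lam) * (2 * β + lam) * (1 - α)))
      / (α ^ (-(1 + lam / β)) * ((1 + lam / β) * ((1 - α) / α) * ε - 1))) :
    (fun ε : ℝ =>
        K₀ * ((1 - α) * ε + α) ^ (β / lam) / ((lam + 2 * β) * (1 - α))
        + β * ε / (β + 2 * lam)
        - α * (β * lam + β + 2 * lam) / ((β + lam) * (β + 2 * lam) * (1 - α))
        + K₁ap ε * ((1 - α) * ε + α) ^ (-(1 + β / lam)))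
      =O[nhdsWithin 0 (Set.Ioi 0)] (fun ε : ℝ => ε ^ 2)
    ∧ (fun ε : ℝ =>
        lam * β * K₀ ^ (-(lam / β)) * ((1 - α) * ε + α) ^ (lam / β)
            / ((2 * lam + β) * (1 - α))
        + lam * ε / (2 * β + lam)
        - α * β * lam * (1 + 2 * β + lam) / ((β + lam) * (2 * β + lam) * (1 - α))
        + K₂ap ε * ((1 - α) * ε + α) ^ (-(1 + lam / β)))
      =O[nhdsWithin 0 (Set.Ioi 0)] (fun ε : ℝ => ε ^ 2) := by
  constructor
  · refine ((bestResponse_approxConst_isBigO_sq hα.1 (β / lam) (K₀ / ((lam + 2 * β) * (1 - α)))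
      (β / (β + 2 * lam))
      (α * (β * lam + β + 2 * lam) / ((β + lam) * (β + 2 * lam) * (1 - α)))).mono
      nhdsWithin_le_nhds).congr_left fun ε => ?_
    rw [bestResponse, approxConst, hK₁ap ε]
    ring
  · refine ((bestResponse_approxConst_isBigO_sq hα.1 (lam / β)
      (lam * β * K₀ ^ (-(lam / β)) / ((2 * lam + β) * (1 - α))) (lam / (2 * β + lam))
      (α * β * lam * (1 + 2 * β + lam) / ((β + lam) * (2 * β + lam) * (1 - α)))).mono
      nhdsWithin_le_nhds).congr_left fun ε => ?_
    rw [bestResponse, approxConst, hK₂ap ε]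
    ring

/-- Boundary-condition content of Theorem 5 (eq. (yy)): with the approximate
constants `K₁ᵃᵖ(ε), K₂ᵃᵖ(ε)` of eqs. (10)–(11), the approximate quasi-equilibrium
strategies satisfy `f₁^ε(ε) = O(ε²)` and `f₂^ε(ε) = O(ε²)` as `ε → 0⁺`. -/
theorem approximate_boundary_conditions
    (α lam β K₀ : ℝ) (hα : α ∈ Set.Ioo (0:ℝ) 1) (hlam : 0 < lam) (hβ : 0 < β)
    (hK₀ : 0 < K₀)
    (K₁ap K₂ap : ℝ → ℝ)
    (hK₁ap : ∀ ε : ℝ, K₁ap ε =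
      (K₀ * α ^ (β / lam) * (1 + (1 - α) * β * ε / (α * lam)) / ((lam + 2 * β) * (1 - α))
        + β * ε / (β + 2 * lam)
        - α * (β * lam + β + 2 * lam) / ((β + lam) * (β + 2 * lam) * (1 - α)))
      / (α ^ (-(1 + β / lam)) * ((1 + β / lam) * ((1 - α) / α) * ε - 1)))
    (hK₂ap : ∀ ε : ℝ, K₂ap ε =
      (lam * β * K₀ ^ (-(lam / β)) * α ^ (lam / β) * (1 + (1 - α) * lam * ε / (α * β))
            / ((2 * lam + β) * (1 - α))
        + lam * ε / (2 * β + lam)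
        - α * β * lam * (1 + 2 * β + lam) / ((β + lam) * (2 * β + lam) * (1 - α)))
      / (α ^ (-(1 + lam / β)) * ((1 + lam / β) * ((1 - α) / α) * ε - 1))) :
    (fun ε : ℝ =>
        K₀ * ((1 - α) * ε + α) ^ (β / lam) / ((lam + 2 * β) * (1 - α))
        + β * ε / (β + 2 * lam)
        - α * (β * lam + β + 2 * lam) / ((β + lam) * (β + 2 * lam) * (1 - α))
        + K₁ap ε * ((1 - α) * ε + α) ^ (-(1 + β / lam)))
      =O[nhdsWithin 0 (Set.Ioi 0)] (fun ε : ℝ => ε ^ 2)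
    ∧ (fun ε : ℝ =>
        lam * β * K₀ ^ (-(lam / β)) * ((1 - α) * ε + α) ^ (lam / β)
            / ((2 * lam + β) * (1 - α))
        + lam * ε / (2 * β + lam)
        - α * β * lam * (1 + 2 * β + lam) / ((β + lam) * (2 * β + lam) * (1 - α))
        + K₂ap ε * ((1 - α) * ε + α) ^ (-(1 + lam / β)))
      =O[nhdsWithin 0 (Set.Ioi 0)] (fun ε : ℝ => ε ^ 2) :=
  approximate_boundary_conditions_general α lam β K₀ hα K₁ap K₂ap hK₁ap hK₂ap
end
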